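/- arXiv:1807.10525 — 9 statements merged into one kernel-verified Lean document; each statement's English description precedes it below -/
import Mathlib

section
/- Let m ≥ 1 and let u, v ∈ 𝔽₂^m. There exists a symmetric m×m matrix S over 𝔽₂ with zero diagonal such that S·u = v if and only if either u = v = 0, or u ≠ 0 and uᵀv = 0. -/
open Matrix

/-
In characteristic two, a symmetric matrix `S` with zero diagonal is alternating:
`u ⬝ᵥ S *ᵥ u = 0`, because the terms `u i * S i j * u j` and `u j * S j i * u i` cancel in pairs
and the diagonal terms vanish. Hence `S *ᵥ u = v` forces `u ⬝ᵥ v = 0`, and `v = 0` when `u = 0`.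
Conversely, if `u p ≠ 0` and `u ⬝ᵥ v = 0`, the rank-two matrix `e_p wᵀ + w e_pᵀ`, with
`w = (u p)⁻¹ • (v - v p • e_p)`, is symmetric with zero diagonal and sends `u` to `v`.
-/

section CharTwo

variable {n R : Type*} [Fintype n]

theorem Matrix.IsSymm.dotProduct_mulVec_self_eq_zero [CommRing R] [CharP R 2]
    {S : Matrix n n R} (hS : S.IsSymm) (hdiag : ∀ i, S i i = 0) (u : n → R) :
    u ⬝ᵥ S *ᵥ u = 0 := by
  have hsum : u ⬝ᵥ S *ᵥ u = ∑ q : n × n, u q.1 * S q.1 q.2 * u q.2 := by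
    simp only [dotProduct, mulVec, Finset.mul_sum, Fintype.sum_prod_type, mul_assoc]
  rw [hsum]
  refine Finset.sum_ninvolution Prod.swap (fun ⟨i, j⟩ => ?_) (fun ⟨i, j⟩ hne hswap => hne ?_)
    (fun _ => Finset.mem_univ _) Prod.swap_swap
  · dsimp only [Prod.swap]
    rw [hS.apply i j, show u j * S i j * u i = u i * S i j * u j by ring,
      CharTwo.add_self_eq_zero]
  · obtain rfl : j = i := congrArg Prod.fst hswap
    dsimp only
    rw [hdiag, mul_zero, zero_mul]

variable [DecidableEq n]

theorem Matrix.exists_isSymm_diag_eq_zero_mulVec_eq [Field R] [CharP R 2] {u : n → R}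
    (hu : u ≠ 0) (v : n → R) (huv : u ⬝ᵥ v = 0) :
    ∃ S : Matrix n n R, S.IsSymm ∧ (∀ i, S i i = 0) ∧ S *ᵥ u = v := by
  obtain ⟨p, hp⟩ := Function.ne_iff.mp hu
  set e : n → R := Pi.single p 1
  set w : n → R := (u p)⁻¹ • (v - v p • e)
  have hwp : w p = 0 := by simp [w, e]
  have hwu : w ⬝ᵥ u = v p := by
    rw [smul_dotProduct, sub_dotProduct, smul_dotProduct, dotProduct_comm, huv,
      single_one_dotProduct, smul_eq_mul, smul_eq_mul, zero_sub, mul_neg,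
      mul_comm (v p), inv_mul_cancel_left₀ hp, CharTwo.neg_eq]
  refine ⟨vecMulVec e w + vecMulVec w e, ?_, fun i => ?_, ?_⟩
  · rw [IsSymm, transpose_add, transpose_vecMulVec, transpose_vecMulVec, add_comm]
  · by_cases hi : i = p
    · simp [hi, vecMulVec_apply, hwp]
    · simp [e, hi, vecMulVec_apply]
  · rw [add_mulVec, vecMulVec_mulVec, vecMulVec_mulVec, op_smul_eq_smul, op_smul_eq_smul, hwu,
      single_one_dotProduct, smul_smul, mul_inv_cancel₀ hp, one_smul, add_sub_cancel]

end CharTwo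

theorem stmt0_general (m : ℕ) (u v : Fin m → ZMod 2) :
    (∃ S : Matrix (Fin m) (Fin m) (ZMod 2),
        S.IsSymm ∧ (∀ i, S i i = 0) ∧ S.mulVec u = v)
    ↔ ((u = 0 ∧ v = 0) ∨ (u ≠ 0 ∧ u ⬝ᵥ v = 0)) := by
  constructor
  · rintro ⟨S, hS, hdiag, rfl⟩
    by_cases hu : u = 0
    · exact Or.inl ⟨hu, by rw [hu, mulVec_zero]⟩
    · exact Or.inr ⟨hu, hS.dotProduct_mulVec_self_eq_zero hdiag u⟩
  · rintro (⟨rfl, rfl⟩ | ⟨hu, huv⟩)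
    · exact ⟨0, isSymm_zero, fun _ => rfl, zero_mulVec 0⟩
    · exact exists_isSymm_diag_eq_zero_mulVec_eq hu v huv

theorem stmt0 (m : ℕ) (hm : 1 ≤ m) (u v : Fin m → ZMod 2) :
    (∃ S : Matrix (Fin m) (Fin m) (ZMod 2),
        S.IsSymm ∧ (∀ i, S i i = 0) ∧ S.mulVec u = v)
    ↔ ((u = 0 ∧ v = 0) ∨ (u ≠ 0 ∧ u ⬝ᵥ v = 0)) :=
  stmt0_general m u v
end

section
/- Let M be an invertible 2m×2m matrix over 𝔽₂ that preserves Q_m = {(x,y) : xᵀy = 0} and S_m = {(x,0) : x ∈ 𝔽₂^m} setwise. Then there exist an invertible m×m matrix A over 𝔽₂ and a symmetric m×m matrix S with zero diagonal such that M = [[A, AS],[0, (Aᵀ)⁻¹]] in block form. -/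
/-!
Since `M` fixes `S_m`, its lower-left block vanishes: `M = [[A, B], [0, D]]`, and then
`q(M(x, y)) = xᵀ(AᵀD)y + (By)ᵀ(Dy)`. As `M` is a bijection preserving `Q_m`, for each fixed `y`
the affine function `x ↦ q(M(x, y))` has the same zero set as `x ↦ xᵀy`; over `𝔽₂` this forces
`AᵀD y = y` and `(By)ᵀ(Dy) = 0`. Hence `D = (Aᵀ)⁻¹`, and the quadratic form of `BᵀD` vanishes
identically, so `BᵀD` is symmetric with zero diagonal in characteristic two; it equals `A⁻¹B`.
-/

open Matrix

variable {l m n o R : Type*}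

def hyperbolicQuadForm [Fintype n] [Mul R] [AddCommMonoid R] (v : n ⊕ n → R) : R :=
  (fun i => v (Sum.inl i)) ⬝ᵥ (fun i => v (Sum.inr i))

theorem Function.Injective.mem_iff_of_image_eq {α : Type*} {f : α → α} (hf : f.Injective)
    {s : Set α} (hs : f '' s = s) (a : α) : f a ∈ s ↔ a ∈ s := by
  simpa only [hs] using hf.mem_set_image (s := s) (a := a)

namespace Matrix

theorem toBlocks₂₁_eq_zero_of_mapsTo [Fintype m] [Fintype n] [DecidableEq m] [DecidableEq n]
    [NonAssocSemiring R] (M : Matrix (l ⊕ o) (m ⊕ n) R)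
    (h : Set.MapsTo M.mulVec {v | ∀ i, v (Sum.inr i) = 0} {v | ∀ i, v (Sum.inr i) = 0}) :
    M.toBlocks₂₁ = 0 := by
  ext i j
  have hj : ∀ k, (Pi.single (Sum.inl j) 1 : m ⊕ n → R) (Sum.inr k) = 0 := fun k =>
    Pi.single_eq_of_ne (by simp) 1
  simpa [mulVec_single_one, toBlocks₂₁] using h hj i

theorem hyperbolicQuadForm_fromBlocks_zero₂₁_mulVec [Fintype n] [CommRing R]
    (A B D : Matrix n n R) (x y : n → R) :
    hyperbolicQuadForm (fromBlocks A B 0 D *ᵥ Sum.elim x y) =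
      x ⬝ᵥ (Aᵀ * D) *ᵥ y + (B *ᵥ y) ⬝ᵥ (D *ᵥ y) := by
  simp only [hyperbolicQuadForm, fromBlocks_mulVec, Sum.elim_comp_inl, Sum.elim_comp_inr,
    zero_mulVec, zero_add, Sum.elim_inl, Sum.elim_inr, add_dotProduct]
  rw [← mulVec_mulVec, dotProduct_transpose_mulVec, dotProduct_comm (D *ᵥ y)]

theorem diag_eq_zero_of_forall_dotProduct_mulVec_self [Fintype n] [DecidableEq n]
    [NonAssocSemiring R] {C : Matrix n n R} (h : ∀ y, y ⬝ᵥ C *ᵥ y = 0) (i : n) : C i i = 0 := by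
  simpa [mulVec_single_one] using h (Pi.single i 1)

theorem isSymm_of_forall_dotProduct_mulVec_self [Fintype n] [DecidableEq n]
    [Ring R] [CharP R 2] {C : Matrix n n R} (h : ∀ y, y ⬝ᵥ C *ᵥ y = 0) : C.IsSymm := by
  refine IsSymm.ext fun i j => CharTwo.add_eq_zero.1 ?_
  have hij := h (Pi.single i 1 + Pi.single j 1)
  simp only [mulVec_add, add_dotProduct, dotProduct_add, single_one_dotProduct,
    mulVec_single_one, col_apply, diag_eq_zero_of_forall_dotProduct_mulVec_self h] at hij
  simpa using hij

end Matrix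

theorem ZMod.eq_of_forall_dotProduct_eq_zero_iff [Fintype n] [DecidableEq n]
    {a b : n → ZMod 2} (h : ∀ x, x ⬝ᵥ a = 0 ↔ x ⬝ᵥ b = 0) : a = b := by
  funext j
  have hj := h (Pi.single j 1)
  simp only [single_one_dotProduct] at hj
  revert hj
  generalize a j = u
  generalize b j = v
  decide +revert

theorem stmt2 (m : ℕ) (M : Matrix (Fin m ⊕ Fin m) (Fin m ⊕ Fin m) (ZMod 2))
    (hM : IsUnit M)
    (hQ : M.mulVec '' {v : Fin m ⊕ Fin m → ZMod 2 |
          (fun i => v (Sum.inl i)) ⬝ᵥ (fun i => v (Sum.inr i)) = 0}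
      = {v : Fin m ⊕ Fin m → ZMod 2 |
          (fun i => v (Sum.inl i)) ⬝ᵥ (fun i => v (Sum.inr i)) = 0})
    (hSm : M.mulVec '' {v : Fin m ⊕ Fin m → ZMod 2 | ∀ i, v (Sum.inr i) = 0}
      = {v : Fin m ⊕ Fin m → ZMod 2 | ∀ i, v (Sum.inr i) = 0}) :
    ∃ A S : Matrix (Fin m) (Fin m) (ZMod 2),
      IsUnit A ∧ S.IsSymm ∧ (∀ i, S i i = 0) ∧
      M = Matrix.fromBlocks A (A * S) 0 Aᵀ⁻¹ := by
  have hQM := (mulVec_injective_iff_isUnit.2 hM).mem_iff_of_image_eq hQ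
  set A := M.toBlocks₁₁
  set B := M.toBlocks₁₂
  set D := M.toBlocks₂₂
  have hM_blocks : M = fromBlocks A B 0 D := by
    rw [← toBlocks₂₁_eq_zero_of_mapsTo M (Set.mapsTo_iff_image_subset.2 hSm.subset),
      fromBlocks_toBlocks]
  have hquad (x y : Fin m → ZMod 2) :
      x ⬝ᵥ (Aᵀ * D) *ᵥ y + (B *ᵥ y) ⬝ᵥ (D *ᵥ y) = 0 ↔ x ⬝ᵥ y = 0 := by
    rw [← hyperbolicQuadForm_fromBlocks_zero₂₁_mulVec, ← hM_blocks]
    exact hQM (Sum.elim x y)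
  have hBD (y : Fin m → ZMod 2) : (B *ᵥ y) ⬝ᵥ (D *ᵥ y) = 0 := by
    simpa using (hquad 0 y).2 (zero_dotProduct y)
  have hAD : Aᵀ * D = 1 := ext_iff_mulVec.2 fun y => by
    rw [one_mulVec]
    exact ZMod.eq_of_forall_dotProduct_eq_zero_iff fun x => by simpa [hBD] using hquad x y
  have hA : IsUnit A.det := det_transpose A ▸ isUnit_det_of_right_inverse hAD
  have hBD_quad (y : Fin m → ZMod 2) : y ⬝ᵥ (Bᵀ * D) *ᵥ y = 0 := by
    rw [← mulVec_mulVec, dotProduct_transpose_mulVec, dotProduct_comm, hBD]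
  have hD : Aᵀ⁻¹ = D := inv_eq_right_inv hAD
  have hBD_symm := isSymm_of_forall_dotProduct_mulVec_self hBD_quad
  have hB : A * (Bᵀ * D) = B :=
    calc A * (Bᵀ * D) = A * (Bᵀ * D)ᵀ := by rw [hBD_symm.eq]
      _ = A * (A⁻¹ * B) := by
        rw [transpose_mul, transpose_transpose, ← hD, transpose_nonsing_inv, transpose_transpose]
      _ = B := by rw [← mul_assoc, mul_nonsing_inv A hA, one_mul]
  refine ⟨A, Bᵀ * D, (isUnit_iff_isUnit_det A).2 hA, hBD_symm,
    diag_eq_zero_of_forall_dotProduct_mulVec_self hBD_quad, ?_⟩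
  rw [hB, hD, hM_blocks]
end

section
/- Let m ≥ 1 and let H_m be the group of invertible 2m×2m matrices over 𝔽₂ of the form [[A, AS],[0, (Aᵀ)⁻¹]] with A ∈ GL(m,2) and S symmetric with zero diagonal. Then H_m acts transitively on the set Q_m \ S_m = {(x,y) ∈ 𝔽₂^m × 𝔽₂^m : xᵀy = 0, y ≠ 0}. -/
/-!
The matrix with blocks `A`, `S` sends `(x, y)` to `(A (x + S y), A⁻ᵀ y)`. Take `B` invertible
with `B y = y'` and `A = B⁻ᵀ`; the second block is then right, and the first one asks for
`S y = u := Bᵀ x' - x`. Since `u ⬝ y = x' ⬝ y' - x ⬝ y = 0`, in characteristic two the matrix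
`S = u eᵀ + e uᵀ`, where `e ⬝ y = 1`, is symmetric with zero diagonal and satisfies `S y = u`.
-/

open Matrix

/-- Membership in the group `H_m` of matrices `[[A, AS],[0,(Aᵀ)⁻¹]]` with `A`
invertible and `S` symmetric with zero diagonal. -/
def InH (m : ℕ) (M : Matrix (Fin m ⊕ Fin m) (Fin m ⊕ Fin m) (ZMod 2)) : Prop :=
  ∃ A S : Matrix (Fin m) (Fin m) (ZMod 2),
    IsUnit A ∧ S.IsSymm ∧ (∀ i, S i i = 0) ∧
    M = Matrix.fromBlocks A (A * S) 0 Aᵀ⁻¹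

theorem LinearEquiv.exists_apply_eq_of_ne_zero {K V : Type*} [Field K] [AddCommGroup V]
    [Module K V] {y y' : V} (hy : y ≠ 0) (hy' : y' ≠ 0) : ∃ g : V ≃ₗ[K] V, g y = y' := by
  obtain ⟨g, hg⟩ := Submodule.exists_linearEquiv_restrict_eq
    (LinearEquiv.coord K V y hy ≪≫ₗ LinearEquiv.toSpanNonzeroSingleton K V y' hy')
  refine ⟨g, ?_⟩
  simpa [LinearEquiv.coord_self] using (hg ⟨y, Submodule.mem_span_singleton_self y⟩).symm

namespace Matrix

variable {K n : Type*} [Fintype n]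

theorem exists_isUnit_mulVec_eq [Field K] [DecidableEq n] {y y' : n → K} (hy : y ≠ 0)
    (hy' : y' ≠ 0) : ∃ B : Matrix n n K, IsUnit B ∧ B *ᵥ y = y' := by
  obtain ⟨g, hg⟩ := LinearEquiv.exists_apply_eq_of_ne_zero (K := K) hy hy'
  refine ⟨LinearMap.toMatrix' g, ?_, by simpa using hg⟩
  exact LinearMap.isUnit_toMatrix'_iff.mpr (LinearMap.GeneralLinearGroup.ofLinearEquiv g).isUnit

theorem exists_dotProduct_eq_one [Field K] [DecidableEq n] {y : n → K} (hy : y ≠ 0) :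
    ∃ e : n → K, e ⬝ᵥ y = 1 := by
  obtain ⟨k, hk⟩ := Function.ne_iff.mp hy
  exact ⟨Pi.single k (y k)⁻¹, by simp [single_dotProduct, inv_mul_cancel₀ hk]⟩

theorem exists_isSymm_diag_eq_zero_mulVec_eq_s5 [CommRing K] [CharP K 2] {y u e : n → K}
    (he : e ⬝ᵥ y = 1) (hu : u ⬝ᵥ y = 0) :
    ∃ S : Matrix n n K, S.IsSymm ∧ (∀ i, S i i = 0) ∧ S *ᵥ y = u := by
  refine ⟨vecMulVec u e + vecMulVec e u, ?_, fun i => ?_, ?_⟩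
  · simp [IsSymm, add_comm]
  · simp [vecMulVec_apply, mul_comm (e i), CharTwo.add_self_eq_zero]
  · simp [add_mulVec, vecMulVec_mulVec, he, hu]

theorem fromBlocks_mulVec_sumElim [NonUnitalSemiring K] (A S B : Matrix n n K) (x y : n → K) :
    fromBlocks A (A * S) 0 B *ᵥ Sum.elim x y = Sum.elim (A *ᵥ (x + S *ᵥ y)) (B *ᵥ y) := by
  simp [fromBlocks_mulVec, mulVec_add, mulVec_mulVec]

theorem exists_fromBlocks_mulVec_eq [Field K] [CharP K 2] [DecidableEq n] {x y x' y' : n → K}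
    (hxy : x ⬝ᵥ y = 0) (hy : y ≠ 0) (hxy' : x' ⬝ᵥ y' = 0) (hy' : y' ≠ 0) :
    ∃ A S : Matrix n n K, IsUnit A ∧ S.IsSymm ∧ (∀ i, S i i = 0) ∧
      fromBlocks A (A * S) 0 Aᵀ⁻¹ *ᵥ Sum.elim x y = Sum.elim x' y' := by
  obtain ⟨B, hB, hBy⟩ := exists_isUnit_mulVec_eq hy hy'
  have hBdet : IsUnit B.det := (isUnit_iff_isUnit_det B).mp hB
  obtain ⟨e, he⟩ := exists_dotProduct_eq_one hy
  have hu : (Bᵀ *ᵥ x' - x) ⬝ᵥ y = 0 := by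
    rw [sub_dotProduct, hxy, sub_zero, mulVec_transpose, ← dotProduct_mulVec, hBy, hxy']
  obtain ⟨S, hS, hSdiag, hSy⟩ := exists_isSymm_diag_eq_zero_mulVec_eq_s5 he hu
  refine ⟨Bᵀ⁻¹, S, isUnit_nonsing_inv_iff.mpr ((isUnit_transpose B).mpr hB), hS, hSdiag, ?_⟩
  rw [fromBlocks_mulVec_sumElim, hSy, add_sub_cancel, mulVec_mulVec,
    nonsing_inv_mul _ (isUnit_det_transpose B hBdet), one_mulVec, transpose_nonsing_inv,
    transpose_transpose, nonsing_inv_nonsing_inv B hBdet, hBy]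

end Matrix

theorem stmt5_general (m : ℕ) (v w : Fin m ⊕ Fin m → ZMod 2)
    (hv : (fun i => v (Sum.inl i)) ⬝ᵥ (fun i => v (Sum.inr i)) = 0 ∧
          (fun i => v (Sum.inr i)) ≠ 0)
    (hw : (fun i => w (Sum.inl i)) ⬝ᵥ (fun i => w (Sum.inr i)) = 0 ∧
          (fun i => w (Sum.inr i)) ≠ 0) :
    ∃ M, InH m M ∧ M.mulVec v = w := by
  obtain ⟨A, S, hA, hS, hSdiag, hAS⟩ := exists_fromBlocks_mulVec_eq hv.1 hv.2 hw.1 hw.2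
  refine ⟨_, ⟨A, S, hA, hS, hSdiag, rfl⟩, ?_⟩
  rwa [← Sum.elim_comp_inl_inr v, ← Sum.elim_comp_inl_inr w]

theorem stmt5 (m : ℕ) (hm : 1 ≤ m) (v w : Fin m ⊕ Fin m → ZMod 2)
    (hv : (fun i => v (Sum.inl i)) ⬝ᵥ (fun i => v (Sum.inr i)) = 0 ∧
          (fun i => v (Sum.inr i)) ≠ 0)
    (hw : (fun i => w (Sum.inl i)) ⬝ᵥ (fun i => w (Sum.inr i)) = 0 ∧
          (fun i => w (Sum.inr i)) ≠ 0) :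
    ∃ M, InH m M ∧ M.mulVec v = w :=
  stmt5_general m v w hv hw
end

section
/- Let m ≥ 2 and let Γ^{(m)} be the graph on 𝔽₂^m × 𝔽₂^m with (v₁,v₂) ~ (w₁,w₂) iff (v₁+w₁)ᵀ(v₂+w₂) = 0 and v₂ ≠ w₂. Then Γ^{(m)} is strongly regular: any two adjacent vertices have exactly 2^{2m-2} − 2^{m-1} common neighbors, and any two distinct non-adjacent vertices also have exactly 2^{2m-2} − 2^{m-1} common neighbors. -/
/-!
Fix the second coordinate `y` of a vertex `(x, y)`. Adjacency of `v` to `(x, y)` says that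
`v.2 + y ≠ 0` and that `x` solves the affine equation `(v.2 + y) ⬝ᵥ x = (v.2 + y) ⬝ᵥ v.1`. So for
`v ≠ w` the common neighbours with second coordinate `y` are the solutions of two affine equations
over `𝔽₂`, and the solution set of a system with linearly independent normals is a coset of
codimension the number of equations.

If `v.2 = w.2`, both equations have the normal `u = v.2 + y` and are compatible iff
`u ⬝ᵥ (v.1 - w.1) = 0`; this holds for `2^(m-1) - 1` nonzero `u`, giving `(2^(m-1) - 1) 2^(m-1)`.
If `v.2 ≠ w.2`, the normals `v.2 + y` and `w.2 + y` are distinct, hence independent over `𝔽₂` as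
soon as both are nonzero, i.e. for the `2^m - 2` values `y ∉ {v.2, w.2}`; this gives
`(2^m - 2) 2^(m-2)`. Both numbers are `2^(2m-2) - 2^(m-1)`.
-/

open Matrix

/-- Adjacency in the Brouwer–Ivanov–Klin graph `Γ^{(m)}`. -/
def Adj (m : ℕ) (v w : (Fin m → ZMod 2) × (Fin m → ZMod 2)) : Prop :=
  (v.1 + w.1) ⬝ᵥ (v.2 + w.2) = 0 ∧ v.2 ≠ w.2

section Counting

variable {K ι n : Type*} [Field K] [Fintype ι] [Fintype n]

theorem Matrix.mulVec_surjective_of_linearIndependent {A : Matrix ι n K}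
    (h : LinearIndependent K A.row) : Function.Surjective A.mulVec := by
  have : LinearMap.range A.mulVecLin = ⊤ := Submodule.eq_top_of_finrank_eq <| by
    rw [← Matrix.rank, h.rank_matrix, Module.finrank_fintype_fun_eq_card]
  exact LinearMap.range_eq_top.1 this

theorem AddMonoidHom.card_fiber_mul_card_of_surjective {G H : Type*} [AddGroup G] [AddGroup H]
    {f : G →+ H} (hf : Function.Surjective f) (h : H) :
    Nat.card (f ⁻¹' {h}) * Nat.card H = Nat.card G := by
  rw [Nat.card_congr (f.fiberEquivKerOfSurjective hf h), ← f.ker.card_mul_index,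
    AddSubgroup.index_ker, f.range_eq_top_of_surjective hf, AddSubgroup.card_top]

theorem Matrix.card_mulVec_eq_mul [Fintype K] {A : Matrix ι n K} (h : LinearIndependent K A.row)
    (c : ι → K) : Nat.card {x // A *ᵥ x = c} * Fintype.card K ^ Fintype.card ι =
      Fintype.card K ^ Fintype.card n := by
  have := A.mulVecLin.toAddMonoidHom.card_fiber_mul_card_of_surjective
    (mulVec_surjective_of_linearIndependent h) c
  simp only [Nat.card_fun, Nat.card_eq_fintype_card (α := K), Nat.card_eq_fintype_card (α := ι),
    Nat.card_eq_fintype_card (α := n)] at this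
  exact this

theorem card_dotProduct_eq_mul [Fintype K] {u : n → K} (hu : u ≠ 0) (c : K) :
    Nat.card {x // u ⬝ᵥ x = c} * Fintype.card K = Fintype.card K ^ Fintype.card n := by
  have h : LinearIndependent K (Matrix.of ![u]).row := linearIndependent_unique_iff.2 (by simpa)
  have := Matrix.card_mulVec_eq_mul h ![c]
  convert this using 3
  · simp [funext_iff]
  · simp

theorem card_dotProduct_eq_and_mul [Fintype K] {u₁ u₂ : n → K} (h : LinearIndependent K ![u₁, u₂])
    (c₁ c₂ : K) : Nat.card {x // u₁ ⬝ᵥ x = c₁ ∧ u₂ ⬝ᵥ x = c₂} * Fintype.card K ^ 2 =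
      Fintype.card K ^ Fintype.card n := by
  have := Matrix.card_mulVec_eq_mul (A := Matrix.of ![u₁, u₂]) h ![c₁, c₂]
  convert this using 3
  · simp [funext_iff, Fin.forall_fin_two]
  · simp

end Counting

theorem ZModModule.add_eq_zero_iff_eq {G : Type*} [AddCommGroup G] [Module (ZMod 2) G] {x y : G} :
    x + y = 0 ↔ x = y := by
  rw [add_eq_zero_iff_eq_neg, ZModModule.neg_eq_self]

theorem ZModModule.linearIndependent_pair {G : Type*} [AddCommGroup G] [Module (ZMod 2) G]
    {x y : G} (hx : x ≠ 0) (hy : y ≠ 0) (hxy : x ≠ y) : LinearIndependent (ZMod 2) ![x, y] := by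
  rw [LinearIndependent.pair_iff]
  have zmod_two : ∀ a : ZMod 2, a = 0 ∨ a = 1 := by decide
  intro s t hst
  rcases zmod_two s with rfl | rfl <;> rcases zmod_two t with rfl | rfl <;>
    simp_all [ZModModule.add_eq_zero_iff_eq]

theorem Nat.card_subtype_prod_eq_sum {α β : Type*} [Finite α] [Fintype β] (P : α × β → Prop) :
    Nat.card {z // P z} = ∑ b, Nat.card {a // P (a, b)} := by
  rw [← Nat.card_sigma]
  exact Nat.card_congr
    { toFun := fun z => ⟨z.1.2, z.1.1, z.2⟩
      invFun := fun s => ⟨(s.2.1, s.1), s.2.2⟩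
      left_inv := fun _ => rfl
      right_inv := fun _ => rfl }

section Graph

variable {m : ℕ}

theorem card_dotProduct_eq {u : Fin m → ZMod 2} (hu : u ≠ 0) (c : ZMod 2) :
    Nat.card {x // u ⬝ᵥ x = c} = 2 ^ (m - 1) := by
  obtain ⟨k, rfl⟩ : ∃ k, m = k + 1 :=
    Nat.exists_eq_add_one.2 (Nat.pos_of_ne_zero (by rintro rfl; exact hu (Subsingleton.elim u 0)))
  have h := card_dotProduct_eq_mul hu c
  rw [ZMod.card, Fintype.card_fin, pow_succ] at h
  exact Nat.eq_of_mul_eq_mul_right two_pos h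

theorem card_dotProduct_eq_and (hm : 2 ≤ m) {u₁ u₂ : Fin m → ZMod 2}
    (h : LinearIndependent (ZMod 2) ![u₁, u₂]) (c₁ c₂ : ZMod 2) :
    Nat.card {x // u₁ ⬝ᵥ x = c₁ ∧ u₂ ⬝ᵥ x = c₂} = 2 ^ (m - 2) := by
  obtain ⟨k, rfl⟩ := Nat.exists_eq_add_of_le' hm
  have h := card_dotProduct_eq_and_mul h c₁ c₂
  rw [ZMod.card, Fintype.card_fin, pow_add] at h
  exact Nat.eq_of_mul_eq_mul_right (by positivity) h

theorem adj_iff (v : (Fin m → ZMod 2) × (Fin m → ZMod 2)) (x y : Fin m → ZMod 2) :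
    Adj m v (x, y) ↔ (v.2 + y) ⬝ᵥ x = (v.2 + y) ⬝ᵥ v.1 ∧ v.2 + y ≠ 0 := by
  rw [Adj, dotProduct_comm, dotProduct_add, add_comm, ZModModule.add_eq_zero_iff_eq,
    Ne, Ne, ZModModule.add_eq_zero_iff_eq]

theorem card_common_neighbors_of_snd_eq {v w : (Fin m → ZMod 2) × (Fin m → ZMod 2)}
    (h₁ : v.1 ≠ w.1) (h₂ : v.2 = w.2) :
    Nat.card {z // Adj m v z ∧ Adj m w z} = (2 ^ (m - 1) - 1) * 2 ^ (m - 1) := by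
  have fiber (u : Fin m → ZMod 2) :
      Nat.card {x // ((u ⬝ᵥ x = u ⬝ᵥ v.1 ∧ u ≠ 0) ∧ u ⬝ᵥ x = u ⬝ᵥ w.1 ∧ u ≠ 0)} =
        if u ≠ 0 ∧ u ⬝ᵥ (v.1 - w.1) = 0 then 2 ^ (m - 1) else 0 := by
    split_ifs with h
    · obtain ⟨hu, hc⟩ := h
      rw [dotProduct_sub, sub_eq_zero] at hc
      simp only [← hc, and_self, Ne, hu, not_false_eq_true, and_true]
      exact card_dotProduct_eq hu _
    · rw [Nat.card_eq_zero]
      refine Or.inl ⟨fun ⟨x, ⟨hv, hu⟩, hw, _⟩ => h ⟨hu, ?_⟩⟩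
      rw [dotProduct_sub, ← hv, ← hw, sub_self]
  rw [Nat.card_subtype_prod_eq_sum, ← Equiv.sum_comp (Equiv.addLeft v.2)]
  simp only [Equiv.coe_addLeft, adj_iff, ← h₂, ← add_assoc, ZModModule.add_self, zero_add, fiber]
  rw [Finset.sum_ite, Finset.sum_const, Finset.sum_const_zero, smul_eq_mul, add_zero]
  congr 1
  have hker : ({u | u ⬝ᵥ (v.1 - w.1) = 0} : Finset _).card = 2 ^ (m - 1) := by
    rw [← Fintype.card_subtype, ← Nat.card_eq_fintype_card]
    simpa only [dotProduct_comm] using card_dotProduct_eq (sub_ne_zero.2 h₁) 0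
  rw [← hker, ← Finset.card_erase_of_mem (a := 0) (by simp)]
  congr 1
  ext u
  simp [and_comm]

theorem card_common_neighbors_of_snd_ne (hm : 2 ≤ m) {v w : (Fin m → ZMod 2) × (Fin m → ZMod 2)}
    (h₂ : v.2 ≠ w.2) :
    Nat.card {z // Adj m v z ∧ Adj m w z} = (2 ^ m - 2) * 2 ^ (m - 2) := by
  have fiber (y : Fin m → ZMod 2) :
      Nat.card {x // ((v.2 + y) ⬝ᵥ x = (v.2 + y) ⬝ᵥ v.1 ∧ v.2 + y ≠ 0) ∧
        (w.2 + y) ⬝ᵥ x = (w.2 + y) ⬝ᵥ w.1 ∧ w.2 + y ≠ 0} =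
        if v.2 + y ≠ 0 ∧ w.2 + y ≠ 0 then 2 ^ (m - 2) else 0 := by
    split_ifs with h
    · obtain ⟨hv, hw⟩ := h
      simp only [hv, hw, Ne, not_false_eq_true, and_true]
      exact card_dotProduct_eq_and hm
        (ZModModule.linearIndependent_pair hv hw fun h => h₂ (add_right_cancel h)) _ _
    · rw [Nat.card_eq_zero]
      exact Or.inl ⟨fun ⟨_, ⟨_, hv⟩, _, hw⟩ => h ⟨hv, hw⟩⟩
  rw [Nat.card_subtype_prod_eq_sum]
  simp only [adj_iff, fiber]
  rw [Finset.sum_ite, Finset.sum_const, Finset.sum_const_zero, smul_eq_mul, add_zero]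
  congr 1
  have hcompl : ({y | v.2 + y ≠ 0 ∧ w.2 + y ≠ 0} : Finset _) = {v.2, w.2}ᶜ := by
    ext y
    simp [ZModModule.add_eq_zero_iff_eq, eq_comm]
  rw [hcompl, Finset.card_compl, Finset.card_pair h₂, Fintype.card_fun, ZMod.card, Fintype.card_fin]

theorem card_common_neighbors (hm : 2 ≤ m) {v w : (Fin m → ZMod 2) × (Fin m → ZMod 2)}
    (hvw : v ≠ w) :
    Nat.card {z // Adj m v z ∧ Adj m w z} = 2 ^ (2 * m - 2) - 2 ^ (m - 1) := by
  by_cases h₂ : v.2 = w.2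
  · rw [card_common_neighbors_of_snd_eq (fun h₁ => hvw (Prod.ext h₁ h₂)) h₂, Nat.sub_mul, one_mul,
      ← pow_add]
    congr 2
    omega
  · rw [card_common_neighbors_of_snd_ne hm h₂, Nat.sub_mul, ← pow_add, ← pow_succ']
    congr 2 <;> omega

end Graph

theorem stmt10 (m : ℕ) (hm : 2 ≤ m) :
    (∀ v w, Adj m v w →
      Nat.card {z // Adj m v z ∧ Adj m w z} = 2 ^ (2 * m - 2) - 2 ^ (m - 1)) ∧
    (∀ v w, v ≠ w → ¬ Adj m v w →
      Nat.card {z // Adj m v z ∧ Adj m w z} = 2 ^ (2 * m - 2) - 2 ^ (m - 1)) := by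
  refine ⟨fun v w hadj => card_common_neighbors hm ?_,
    fun v w hvw _ => card_common_neighbors hm hvw⟩
  rintro rfl
  exact hadj.2 rfl
end

section
/- Let m ≥ 2 and let Γ^{(m)} be the graph on 𝔽₂^m × 𝔽₂^m with (v₁,v₂) ~ (w₁,w₂) iff (v₁+w₁)ᵀ(v₂+w₂) = 0 and v₂ ≠ w₂. Then every affine transformation x ↦ Mx + c, where M = [[A, AS],[0,(Aᵀ)⁻¹]] with A ∈ GL(m,2) and S symmetric with zero diagonal, and c ∈ 𝔽₂^{2m}, is an automorphism of Γ^{(m)}. -/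
/-!
`Γ^{(m)}` is a Cayley graph of `𝔽₂^{2m}`: in characteristic 2, `v ~ w` holds iff `z = v + w`
satisfies `z₁ᵀz₂ = 0` and `z₂ ≠ 0`. Translations are therefore automorphisms, and it suffices
that the linear part `M` preserves this connection set. It preserves `z₂ ≠ 0` because `(Aᵀ)⁻¹` is
invertible, and `(Mz)₁ᵀ(Mz)₂ = (z₁ + Sz₂)ᵀAᵀ(Aᵀ)⁻¹z₂ = z₁ᵀz₂ + z₂ᵀSz₂`, where the last term
vanishes because `S` is alternating.
-/

open Matrix

namespace Matrix

variable {n R : Type*} [Fintype n]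

theorem mulVec_dotProduct_self_eq_zero_of_isSymm [CommSemiring R] [CharP R 2]
    {S : Matrix n n R} (hS : S.IsSymm) (hS0 : ∀ i, S i i = 0) (y : n → R) :
    S *ᵥ y ⬝ᵥ y = 0 := by
  have hsum : S *ᵥ y ⬝ᵥ y = ∑ p : n × n, S p.1 p.2 * y p.2 * y p.1 := by
    simp only [dotProduct, mulVec, Finset.sum_mul, Fintype.sum_prod_type]
  rw [hsum]
  refine Finset.sum_involution (fun p _ => p.swap) (fun p _ => ?_) (fun p _ hp hswap => ?_)
    (fun _ _ => Finset.mem_univ _) (fun p _ => p.swap_swap)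
  · rw [Prod.fst_swap, Prod.snd_swap, hS.apply, mul_right_comm]
    exact CharTwo.add_self_eq_zero _
  · obtain ⟨i, j⟩ := p
    obtain rfl : j = i := congrArg Prod.fst hswap
    simp [hS0] at hp

variable [DecidableEq n] [CommRing R]

/-- The linear map `z ↦ M z` with block matrix `M = [[A, A S], [0, (Aᵀ)⁻¹]]`. -/
noncomputable def blockMap (A S : Matrix n n R) : (n → R) × (n → R) →ₗ[R] (n → R) × (n → R) :=
  (A.mulVecLin.coprod (A * S).mulVecLin).prod ((Aᵀ)⁻¹.mulVecLin ∘ₗ LinearMap.snd R _ _)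

theorem blockMap_apply (A S : Matrix n n R) (z : (n → R) × (n → R)) :
    blockMap A S z = (A *ᵥ z.1 + (A * S) *ᵥ z.2, (Aᵀ)⁻¹ *ᵥ z.2) :=
  rfl

variable {A : Matrix n n R} (hA : IsUnit A) (S : Matrix n n R)
include hA

theorem blockMap_snd_eq_zero_iff (z : (n → R) × (n → R)) :
    (blockMap A S z).2 = 0 ↔ z.2 = 0 :=
  (mulVec_injective_of_isUnit (isUnit_nonsing_inv_iff.mpr ((isUnit_transpose A).mpr hA))).eq_iff'
    (mulVec_zero _)

theorem blockMap_injective : Function.Injective (blockMap A S) := by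
  rw [← LinearMap.ker_eq_bot, LinearMap.ker_eq_bot']
  intro z hz
  have h2 : z.2 = 0 := (blockMap_snd_eq_zero_iff hA S z).mp (congrArg Prod.snd hz)
  have h1 : A *ᵥ z.1 = 0 := by simpa [blockMap_apply, h2] using congrArg Prod.fst hz
  exact Prod.ext (mulVec_injective_of_isUnit hA (h1.trans (mulVec_zero A).symm)) h2

theorem blockMap_fst_dotProduct_snd (z : (n → R) × (n → R)) :
    (blockMap A S z).1 ⬝ᵥ (blockMap A S z).2 = z.1 ⬝ᵥ z.2 + S *ᵥ z.2 ⬝ᵥ z.2 := by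
  have hdet : IsUnit Aᵀ.det := (isUnit_iff_isUnit_det _).mp ((isUnit_transpose A).mpr hA)
  calc (blockMap A S z).1 ⬝ᵥ (blockMap A S z).2
      = A *ᵥ (z.1 + S *ᵥ z.2) ⬝ᵥ (Aᵀ)⁻¹ *ᵥ z.2 := by
        rw [blockMap_apply, mulVec_add, mulVec_mulVec]
    _ = (z.1 + S *ᵥ z.2) ⬝ᵥ Aᵀ *ᵥ ((Aᵀ)⁻¹ *ᵥ z.2) := by
        rw [dotProduct_comm, dotProduct_mulVec, ← mulVec_transpose, dotProduct_comm]
    _ = z.1 ⬝ᵥ z.2 + S *ᵥ z.2 ⬝ᵥ z.2 := by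
        rw [mulVec_mulVec, mul_nonsing_inv _ hdet, one_mulVec, add_dotProduct]

end Matrix

def connectionSet (n R : Type*) [Fintype n] [Mul R] [AddCommMonoid R] : Set ((n → R) × (n → R)) :=
  {z | z.1 ⬝ᵥ z.2 = 0 ∧ z.2 ≠ 0}

theorem adj_iff_add_mem_connectionSet {m : ℕ} (v w : (Fin m → ZMod 2) × (Fin m → ZMod 2)) :
    Adj m v w ↔ v + w ∈ connectionSet (Fin m) (ZMod 2) := by
  rw [Adj, connectionSet, Set.mem_ofPred_eq, Prod.fst_add, Prod.snd_add, Ne, Ne,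
    ← ZModModule.sub_eq_add v.2, sub_eq_zero]

theorem Matrix.blockMap_mem_connectionSet_iff {n R : Type*} [Fintype n] [DecidableEq n]
    [CommRing R] [CharP R 2] {A S : Matrix n n R} (hA : IsUnit A) (hS : S.IsSymm)
    (hS0 : ∀ i, S i i = 0) (z : (n → R) × (n → R)) :
    blockMap A S z ∈ connectionSet n R ↔ z ∈ connectionSet n R := by
  simp only [connectionSet, Set.mem_ofPred_eq, blockMap_fst_dotProduct_snd hA,
    mulVec_dotProduct_self_eq_zero_of_isSymm hS hS0, add_zero, Ne, blockMap_snd_eq_zero_iff hA S]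

theorem stmt11_general (m : ℕ) (A S : Matrix (Fin m) (Fin m) (ZMod 2))
    (hA : IsUnit A) (hS : S.IsSymm) (hS0 : ∀ i, S i i = 0)
    (c : (Fin m → ZMod 2) × (Fin m → ZMod 2)) :
    Function.Bijective (fun v : (Fin m → ZMod 2) × (Fin m → ZMod 2) =>
        (A.mulVec v.1 + (A * S).mulVec v.2 + c.1, Aᵀ⁻¹.mulVec v.2 + c.2)) ∧
    (∀ u w, Adj m ((A.mulVec u.1 + (A * S).mulVec u.2 + c.1, Aᵀ⁻¹.mulVec u.2 + c.2))
                 ((A.mulVec w.1 + (A * S).mulVec w.2 + c.1, Aᵀ⁻¹.mulVec w.2 + c.2))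
        ↔ Adj m u w) := by
  change Function.Bijective (fun v => blockMap A S v + c) ∧
    ∀ u w, Adj m (blockMap A S u + c) (blockMap A S w + c) ↔ Adj m u w
  have hsum (u w) : (blockMap A S u + c) + (blockMap A S w + c) = blockMap A S (u + w) := by
    rw [add_add_add_comm, ZModModule.add_self, add_zero, map_add]
  refine ⟨Finite.injective_iff_bijective.mp fun u w huw => ?_, fun u w => ?_⟩
  · rw [← sub_eq_zero, ZModModule.sub_eq_add]
    refine blockMap_injective hA S ?_
    rw [← hsum, huw, ZModModule.add_self, map_zero]
  · rw [adj_iff_add_mem_connectionSet, adj_iff_add_mem_connectionSet, hsum,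
      blockMap_mem_connectionSet_iff hA hS hS0]

theorem stmt11 (m : ℕ) (hm : 2 ≤ m) (A S : Matrix (Fin m) (Fin m) (ZMod 2))
    (hA : IsUnit A) (hS : S.IsSymm) (hS0 : ∀ i, S i i = 0)
    (c : (Fin m → ZMod 2) × (Fin m → ZMod 2)) :
    Function.Bijective (fun v : (Fin m → ZMod 2) × (Fin m → ZMod 2) =>
        (A.mulVec v.1 + (A * S).mulVec v.2 + c.1, Aᵀ⁻¹.mulVec v.2 + c.2)) ∧
    (∀ u w, Adj m ((A.mulVec u.1 + (A * S).mulVec u.2 + c.1, Aᵀ⁻¹.mulVec u.2 + c.2))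
                 ((A.mulVec w.1 + (A * S).mulVec w.2 + c.1, Aᵀ⁻¹.mulVec w.2 + c.2))
        ↔ Adj m u w) :=
  stmt11_general m A S hA hS hS0 c
end

section
/- Let m ≥ 2, and define ρ₂ = {(v,w) : v+w ∈ S_m \ {0}}, ρ₃ = {(v,w) : v+w ∈ Q_m \ S_m}, ρ₄ = {(v,w) : v+w ∉ Q_m} on 𝔽₂^{2m}. Then for any (x,y) ∈ ρ₂ the number of z with (x,z) ∈ ρ₃ and (z,y) ∈ ρ₃ equals 2^{m-1}(2^{m-1} − 1), i.e., p₃₃² = 4θ(4θ−1) with θ = 2^{m-3}. -/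
/-!
Put `c = x + y = (c₁, 0)` with `c₁ ≠ 0` and substitute `p = x + z`; in characteristic two
`z + y = p + c`, and `(p + c)₁ ⬝ p₂ = p₁ ⬝ p₂ + c₁ ⬝ p₂`. So `z` is counted exactly when
`p₁ ⬝ p₂ = 0`, `p₂ ≠ 0` and `c₁ ⬝ p₂ = 0`: there are `2^(m-1) - 1` choices of `p₂` in the
hyperplane `c₁^⊥` minus the origin, and for each of them `2^(m-1)` choices of `p₁` in `p₂^⊥`.
-/

open Matrix

section FiniteField

variable {K n : Type*} [Field K] [Fintype K] [Fintype n] [DecidableEq n]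

theorem card_dotProduct_eq_zero {b : n → K} (hb : b ≠ 0) :
    Nat.card {a : n → K // b ⬝ᵥ a = 0} = Fintype.card K ^ (Fintype.card n - 1) := by
  set f := dotProductEquiv K n b
  have hf : f ≠ 0 := (dotProductEquiv K n).map_ne_zero_iff.mpr hb
  have hker := f.finrank_ker_add_one_of_ne_zero hf
  rw [Module.finrank_fintype_fun_eq_card] at hker
  calc Nat.card {a : n → K // b ⬝ᵥ a = 0}
      = Nat.card (LinearMap.ker f) := rfl
    _ = Nat.card K ^ Module.finrank K (LinearMap.ker f) := Module.natCard_eq_pow_finrank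
    _ = Fintype.card K ^ (Fintype.card n - 1) := by
      rw [Nat.card_eq_fintype_card]
      congr 1
      omega

theorem card_ne_zero_and_dotProduct_eq_zero {c : n → K} (hc : c ≠ 0) :
    Nat.card {b : n → K // b ≠ 0 ∧ c ⬝ᵥ b = 0} = Fintype.card K ^ (Fintype.card n - 1) - 1 := by
  have hdiff : {b : n → K | b ≠ 0 ∧ c ⬝ᵥ b = 0} = {b | c ⬝ᵥ b = 0} \ {0} := by
    ext b
    simp [and_comm]
  rw [← Set.coe_ofPred, Nat.card_coe_set_eq, hdiff, Set.ncard_sdiff_singleton_of_mem (by simp),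
    ← Nat.card_coe_set_eq, Set.coe_ofPred, card_dotProduct_eq_zero hc]

theorem card_isotropic_pairs_with_snd_orthogonal {c : n → K} (hc : c ≠ 0) :
    Nat.card {p : (n → K) × (n → K) // p.1 ⬝ᵥ p.2 = 0 ∧ p.2 ≠ 0 ∧ c ⬝ᵥ p.2 = 0}
      = Fintype.card K ^ (Fintype.card n - 1) * (Fintype.card K ^ (Fintype.card n - 1) - 1) := by
  classical
  let e : {p : (n → K) × (n → K) // p.1 ⬝ᵥ p.2 = 0 ∧ p.2 ≠ 0 ∧ c ⬝ᵥ p.2 = 0} ≃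
      Σ b : {b : n → K // b ≠ 0 ∧ c ⬝ᵥ b = 0}, {a : n → K // b.1 ⬝ᵥ a = 0} :=
    { toFun p := ⟨⟨p.1.2, p.2.2⟩, ⟨p.1.1, by rw [dotProduct_comm]; exact p.2.1⟩⟩
      invFun q := ⟨(q.2.1, q.1.1), by rw [dotProduct_comm]; exact q.2.2, q.1.2⟩
      left_inv _ := rfl
      right_inv _ := rfl }
  rw [Nat.card_congr e, Nat.card_sigma,
    Finset.sum_congr rfl fun b _ => card_dotProduct_eq_zero b.2.1, Finset.sum_const,
    Finset.card_univ, ← Nat.card_eq_fintype_card, card_ne_zero_and_dotProduct_eq_zero hc,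
    smul_eq_mul, mul_comm]

end FiniteField

theorem stmt13_general (m : ℕ)
    (x y : (Fin m → ZMod 2) × (Fin m → ZMod 2))
    (hxy : (x + y).2 = 0 ∧ x + y ≠ 0) :
    Nat.card {z : (Fin m → ZMod 2) × (Fin m → ZMod 2) //
        ((x + z).1 ⬝ᵥ (x + z).2 = 0 ∧ (x + z).2 ≠ 0) ∧
        ((z + y).1 ⬝ᵥ (z + y).2 = 0 ∧ (z + y).2 ≠ 0)}
      = 2 ^ (m - 1) * (2 ^ (m - 1) - 1) := by
  obtain ⟨hc₂, hc⟩ := hxy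
  have hc₁ : (x + y).1 ≠ 0 := fun h => hc (Prod.ext h hc₂)
  have hxx : x + x = 0 := by
    ext i <;> exact CharTwo.add_self_eq_zero _
  have hzy (z) : z + y = (x + z) + (x + y) :=
    calc z + y = (x + x) + (z + y) := by rw [hxx, zero_add]
      _ = (x + z) + (x + y) := by abel
  calc _ = Nat.card {p : (Fin m → ZMod 2) × (Fin m → ZMod 2) //
          p.1 ⬝ᵥ p.2 = 0 ∧ p.2 ≠ 0 ∧ (x + y).1 ⬝ᵥ p.2 = 0} := by
        refine Nat.card_congr (Equiv.subtypeEquiv (Equiv.addLeft x) fun z => ?_)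
        simp only [Equiv.coe_addLeft, hzy z, Prod.fst_add, Prod.snd_add, hc₂, add_zero,
          add_dotProduct]
        constructor
        · rintro ⟨⟨hp, hp₂⟩, hcp, -⟩
          exact ⟨hp, hp₂, by rwa [hp, zero_add] at hcp⟩
        · rintro ⟨hp, hp₂, hcp⟩
          exact ⟨⟨hp, hp₂⟩, by rw [hp, hcp, zero_add], hp₂⟩
    _ = 2 ^ (m - 1) * (2 ^ (m - 1) - 1) := by
        simpa using card_isotropic_pairs_with_snd_orthogonal hc₁

theorem stmt13 (m : ℕ) (hm : 2 ≤ m)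
    (x y : (Fin m → ZMod 2) × (Fin m → ZMod 2))
    (hxy : (x + y).2 = 0 ∧ x + y ≠ 0) :
    Nat.card {z : (Fin m → ZMod 2) × (Fin m → ZMod 2) //
        ((x + z).1 ⬝ᵥ (x + z).2 = 0 ∧ (x + z).2 ≠ 0) ∧
        ((z + y).1 ⬝ᵥ (z + y).2 = 0 ∧ (z + y).2 ≠ 0)}
      = 2 ^ (m - 1) * (2 ^ (m - 1) - 1) :=
  stmt13_general m x y hxy
end

section
/- Let m ≥ 2, and define ρ₃ = {(v,w) ∈ (𝔽₂^{2m})² : v+w ∈ Q_m \ S_m} and ρ₄ = {(v,w) : v+w ∉ Q_m}. Then for any (x,y) ∈ ρ₄, the number of z with (x,z) ∈ ρ₃ and (z,y) ∈ ρ₃ equals 2^{m-1}(2^{m-1} − 1). -/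
/-!
Translate by `x`: with `u = x + z = (a, b)` and `c = x + y`, the conditions read `u ∈ Q \ S` and
`u + c ∈ Q \ S`, where `c₁ ⬝ᵥ c₂ = 1`. Expanding `(a + c₁) ⬝ᵥ (b + c₂)` turns this into
`b ∉ {0, c₂}` together with the two affine conditions `a ⬝ᵥ b = 0`, `a ⬝ᵥ c₂ = c₁ ⬝ᵥ b + 1` on `a`.
Over `𝔽₂` distinct nonzero `b, c₂` are linearly independent, so these cut out `2 ^ (m - 2)`
vectors `a`, and the count is `(2 ^ m - 2) * 2 ^ (m - 2)`.
-/

open Matrix Finset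

theorem AddMonoidHom.card_fiber_eq_card_div_of_surjective {G M F : Type*} [AddGroup G] [Fintype G]
    [AddMonoid M] [Fintype M] [DecidableEq M] [FunLike F G M] [AddMonoidHomClass F G M]
    (f : F) (hf : Function.Surjective f) (y : M) :
    #{g | f g = y} = Fintype.card G / Fintype.card M := by
  have hsum : Fintype.card G = ∑ y' : M, #{g | f g = y'} :=
    card_eq_sum_card_fiberwise fun _ _ => mem_univ _
  rw [hsum, Finset.sum_congr rfl fun y' _ => AddMonoidHom.card_fiber_eq_of_mem_range f
      (hf y') (hf y), sum_const, card_univ, smul_eq_mul,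
    Nat.mul_div_cancel_left _ Fintype.card_pos]

theorem Matrix.mulVec_surjective_of_linearIndependent_row {K ι n : Type*} [Field K] [Fintype ι]
    [Fintype n] {M : Matrix ι n K} (h : LinearIndependent K M.row) :
    Function.Surjective M.mulVec := by
  have hrange : LinearMap.range M.mulVecLin = ⊤ :=
    Submodule.eq_top_of_finrank_eq (by simpa [Matrix.rank] using h.rank_matrix)
  exact LinearMap.range_eq_top.mp hrange

theorem ZMod.linearIndependent_pair_two {V : Type*} [AddCommGroup V] [Module (ZMod 2) V]
    {b c : V} (hb : b ≠ 0) (hc : c ≠ 0) (hbc : b ≠ c) : LinearIndependent (ZMod 2) ![b, c] := by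
  refine (LinearIndependent.pair_iff' hb).mpr fun s => ?_
  obtain rfl | rfl : s = 0 ∨ s = 1 := by revert s; decide
  · simpa using hc.symm
  · simpa using hbc

section

variable {n : Type*} [Fintype n]

theorem card_dotProduct_fiber_two [DecidableEq n] {b c : n → ZMod 2} (hb : b ≠ 0) (hc : c ≠ 0)
    (hbc : b ≠ c) (s t : ZMod 2) :
    #{a | a ⬝ᵥ b = s ∧ a ⬝ᵥ c = t} = 2 ^ Fintype.card n / 4 := by
  let M : Matrix (Fin 2) n (ZMod 2) := ![b, c]
  have hM : ∀ a, M *ᵥ a = ![s, t] ↔ a ⬝ᵥ b = s ∧ a ⬝ᵥ c = t := by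
    intro a
    simp [M, funext_iff, Fin.forall_fin_two, mulVec, dotProduct_comm]
  have hsurj : Function.Surjective M.mulVecLin :=
    mulVec_surjective_of_linearIndependent_row (ZMod.linearIndependent_pair_two hb hc hbc)
  simpa [hM] using AddMonoidHom.card_fiber_eq_card_div_of_surjective _ hsurj ![s, t]

theorem isotropic_pair_translate_iff {c₁ c₂ : n → ZMod 2} (hc : c₁ ⬝ᵥ c₂ = 1) (a b : n → ZMod 2) :
    ((a ⬝ᵥ b = 0 ∧ b ≠ 0) ∧ ((a + c₁) ⬝ᵥ (b + c₂) = 0 ∧ b + c₂ ≠ 0)) ↔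
      (b ≠ 0 ∧ b ≠ c₂) ∧ (a ⬝ᵥ b = 0 ∧ a ⬝ᵥ c₂ = c₁ ⬝ᵥ b + 1) := by
  have hexpand : (a + c₁) ⬝ᵥ (b + c₂) = a ⬝ᵥ b + (a ⬝ᵥ c₂ + (c₁ ⬝ᵥ b + 1)) := by
    simp only [add_dotProduct, dotProduct_add, hc]; ring
  have hshift : b + c₂ ≠ 0 ↔ b ≠ c₂ := by
    rw [Ne, add_eq_zero_iff_eq_neg, ZModModule.neg_eq_self]
  rw [hexpand, hshift]
  constructor
  · rintro ⟨⟨hab, hb⟩, hsum, hbc⟩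
    rw [hab, zero_add, CharTwo.add_eq_zero] at hsum
    exact ⟨⟨hb, hbc⟩, hab, hsum⟩
  · rintro ⟨⟨hb, hbc⟩, hab, hac⟩
    exact ⟨⟨hab, hb⟩, by rw [hab, hac, zero_add, CharTwo.add_self_eq_zero], hbc⟩

theorem card_isotropic_pairs_translate [DecidableEq n] (c : (n → ZMod 2) × (n → ZMod 2))
    (hc : c.1 ⬝ᵥ c.2 = 1) :
    Nat.card {u : (n → ZMod 2) × (n → ZMod 2) //
        (u.1 ⬝ᵥ u.2 = 0 ∧ u.2 ≠ 0) ∧ ((u + c).1 ⬝ᵥ (u + c).2 = 0 ∧ (u + c).2 ≠ 0)}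
      = (2 ^ Fintype.card n - 2) * (2 ^ Fintype.card n / 4) := by
  have hc₂ : c.2 ≠ 0 := by intro h; simp [h] at hc
  have hfiber : ∀ b : n → ZMod 2,
      #{a | (b ≠ 0 ∧ b ≠ c.2) ∧ (a ⬝ᵥ b = 0 ∧ a ⬝ᵥ c.2 = c.1 ⬝ᵥ b + 1)}
        = if b ≠ 0 ∧ b ≠ c.2 then 2 ^ Fintype.card n / 4 else 0 := by
    intro b
    split_ifs with hb
    · simpa [hb] using card_dotProduct_fiber_two hb.1 hc₂ hb.2 0 (c.1 ⬝ᵥ b + 1)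
    · simp [hb]
  have hcard : #{b : n → ZMod 2 | b ≠ 0 ∧ b ≠ c.2} = 2 ^ Fintype.card n - 2 := by
    have hset : ({b | b ≠ 0 ∧ b ≠ c.2} : Finset (n → ZMod 2)) = univ \ {0, c.2} := by
      ext b; simp [not_or]
    rw [hset, card_sdiff_of_subset (subset_univ _), card_pair hc₂.symm, card_univ,
      Fintype.card_fun, ZMod.card]
  rw [Nat.card_eq_fintype_card, Fintype.card_subtype, card_filter, Fintype.sum_prod_type_right]
  simp only [Prod.fst_add, Prod.snd_add, isotropic_pair_translate_iff hc, ← card_filter, hfiber]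
  rw [sum_ite, sum_const_zero, add_zero, sum_const, smul_eq_mul, hcard]

end

theorem two_pow_sub_two_mul_two_pow_div_four (m : ℕ) :
    (2 ^ m - 2) * (2 ^ m / 4) = 2 ^ (m - 1) * (2 ^ (m - 1) - 1) := by
  obtain _ | _ | k := m
  · rfl
  · rfl
  · have hpow : 2 ^ (k + 2) = 2 ^ k * 4 := by ring
    rw [hpow, Nat.mul_div_cancel _ four_pos, Nat.add_sub_cancel, pow_succ,
      show 2 ^ k * 4 - 2 = 2 * (2 ^ k * 2 - 1) by omega]
    ring

theorem stmt14_general (m : ℕ)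
    (x y : (Fin m → ZMod 2) × (Fin m → ZMod 2))
    (hxy : (x + y).1 ⬝ᵥ (x + y).2 ≠ 0) :
    Nat.card {z : (Fin m → ZMod 2) × (Fin m → ZMod 2) //
        ((x + z).1 ⬝ᵥ (x + z).2 = 0 ∧ (x + z).2 ≠ 0) ∧
        ((z + y).1 ⬝ᵥ (z + y).2 = 0 ∧ (z + y).2 ≠ 0)}
      = 2 ^ (m - 1) * (2 ^ (m - 1) - 1) := by
  have hc : (x + y).1 ⬝ᵥ (x + y).2 = 1 := (by decide : ∀ s : ZMod 2, s ≠ 0 → s = 1) _ hxy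
  have hshift : ∀ z, x + z + (x + y) = z + y := fun z => by
    rw [add_add_add_comm, ZModModule.add_self, zero_add]
  have hcount := card_isotropic_pairs_translate (x + y) hc
  rw [Fintype.card_fin, two_pow_sub_two_mul_two_pow_div_four] at hcount
  rw [← hcount]
  exact Nat.card_congr (Equiv.subtypeEquiv (Equiv.addLeft x) fun z => by
    simp only [Equiv.coe_addLeft, hshift])

theorem stmt14 (m : ℕ) (hm : 2 ≤ m)
    (x y : (Fin m → ZMod 2) × (Fin m → ZMod 2))
    (hxy : (x + y).1 ⬝ᵥ (x + y).2 ≠ 0) :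
    Nat.card {z : (Fin m → ZMod 2) × (Fin m → ZMod 2) //
        ((x + z).1 ⬝ᵥ (x + z).2 = 0 ∧ (x + z).2 ≠ 0) ∧
        ((z + y).1 ⬝ᵥ (z + y).2 = 0 ∧ (z + y).2 ≠ 0)}
      = 2 ^ (m - 1) * (2 ^ (m - 1) - 1) :=
  stmt14_general m x y hxy
end

section
/- Let m ≥ 4 and let Γ^{(m)} be the graph on 𝔽₂^m × 𝔽₂^m with (v₁,v₂) ~ (w₁,w₂) iff (v₁+w₁)ᵀ(v₂+w₂) = 0 and v₂ ≠ w₂. Then Γ^{(m)} is not 2-homogeneous: no automorphism of Γ^{(m)} maps the pair (0, (e₁,0)) to the pair (0, (e₁,e₁)). -/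
/-!
Call a pair `(a, b)` *joined* if any two common neighbours of `a` and `b` have a further common
neighbour adjacent to both; graph automorphisms preserve this property.

Write `q(v) = v₁ ⬝ v₂`. For vertices with `q(x) = q(z) = 0`, `x ~ z` iff `x₂ ⬝ z₁ = x₁ ⬝ z₂` and
`x₂ ≠ z₂`. The common neighbours of `(0,0)` and `(a,0)` all have `q = 0`, so for two of them,
`x` and `y`, it suffices to find `z₂ ⊥ a` outside `span {x₂, y₂}` (also `⊥ x₁ + y₁` if
`x₂ = y₂`), which exists because `m ≥ 4`, and then to solve the linear system
`z₂ ⬝ z₁ = 0`, `x₂ ⬝ z₁ = x₁ ⬝ z₂`, `y₂ ⬝ z₁ = y₁ ⬝ z₂` for `z₁`.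

The pair `((0,0), (e₁,e₁))` is not joined: take `x = (e₁,e₂)` and `y = (0,e₁+e₂)`. These four
vertices `u` sum to `0` and their values `q(u)` sum to `1`, so summing the equations
`(u₁ + z₁) ⬝ (u₂ + z₂) = 0` over them, all terms involving `z` cancel mod `2` and leave `1 = 0`.
-/

open Matrix

open Function Submodule

def CommonNbhdJoined {V : Type*} (r : V → V → Prop) (a b : V) : Prop :=
  ∀ x y, r a x → r b x → r a y → r b y → ∃ z, r a z ∧ r b z ∧ r x z ∧ r y z

theorem CommonNbhdJoined.map {V W : Type*} {r : V → V → Prop} {s : W → W → Prop} {f : V → W}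
    (hf : Surjective f) (hrs : ∀ u w, s (f u) (f w) ↔ r u w) {a b : V}
    (h : CommonNbhdJoined r a b) : CommonNbhdJoined s (f a) (f b) := by
  intro x' y'
  obtain ⟨x, rfl⟩ := hf x'
  obtain ⟨y, rfl⟩ := hf y'
  simp only [hrs]
  intro hax hbx hay hby
  obtain ⟨z, hz⟩ := h x y hax hbx hay hby
  exact ⟨f z, by simpa only [hrs] using hz⟩

section LinearAlgebra

variable {K ι n : Type*} [Field K] [Fintype ι] [Fintype n]

theorem exists_dotProduct_eq_of_linearIndependent {v : ι → n → K}
    (hv : LinearIndependent K v) (g : ι → K) : ∃ z, ∀ i, v i ⬝ᵥ z = g i := by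
  have hrange : LinearMap.range (of v).mulVecLin = ⊤ :=
    eq_top_of_finrank_eq <| by
      rw [← Matrix.rank, hv.rank_matrix (M := of v), Module.finrank_fintype_fun_eq_card]
  obtain ⟨z, hz⟩ := LinearMap.range_eq_top.mp hrange g
  exact ⟨z, congrFun hz⟩

theorem exists_dotProduct_eq_zero_notMem_span (v : ι → n → K) (s : Finset (n → K))
    (hs : Fintype.card ι + s.card < Fintype.card n) :
    ∃ z, (∀ i, v i ⬝ᵥ z = 0) ∧ z ∉ span K (s : Set (n → K)) := by
  have hker : ¬ LinearMap.ker (of v).mulVecLin ≤ span K (s : Set (n → K)) := by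
    intro hle
    have h₁ := finrank_mono hle
    have h₂ := (of v).mulVecLin.finrank_range_add_finrank_ker
    have h₃ := (of v).rank_le_card_height
    have h₄ := finrank_span_finset_le_card (R := K) s
    rw [Module.finrank_fintype_fun_eq_card, ← Matrix.rank] at h₂
    rw [Set.finrank] at h₄
    omega
  obtain ⟨z, hz, hzs⟩ := SetLike.not_le_iff_exists.mp hker
  exact ⟨z, congrFun hz, hzs⟩

end LinearAlgebra

theorem linearIndependent_pair_zmod_two {M : Type*} [AddCommGroup M] [Module (ZMod 2) M]
    {x y : M} (hx : x ≠ 0) (hy : y ≠ 0) (hxy : x ≠ y) :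
    LinearIndependent (ZMod 2) ![x, y] :=
  (LinearIndependent.pair_iff' hx).2 fun c => by
    obtain rfl | rfl : c = 0 ∨ c = 1 := by revert c; decide
    exacts [by simpa using hy.symm, by simpa using hxy]

variable {m : ℕ}

namespace Adj

theorem zero_left_iff {z : (Fin m → ZMod 2) × (Fin m → ZMod 2)} :
    Adj m (0, 0) z ↔ z.1 ⬝ᵥ z.2 = 0 ∧ z.2 ≠ 0 := by
  simp [Adj, ne_comm]

theorem iff_of_dotProduct_eq_zero {x z : (Fin m → ZMod 2) × (Fin m → ZMod 2)}
    (hx : x.1 ⬝ᵥ x.2 = 0) (hz : z.1 ⬝ᵥ z.2 = 0) :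
    Adj m x z ↔ x.2 ⬝ᵥ z.1 = x.1 ⬝ᵥ z.2 ∧ x.2 ≠ z.2 := by
  rw [Adj, add_dotProduct, dotProduct_add, dotProduct_add, hx, hz, zero_add, add_zero,
    dotProduct_comm z.1, CharTwo.add_eq_zero, eq_comm]

theorem no_common_neighbour_of_add_eq_zero
    {u₁ u₂ u₃ u₄ z : (Fin m → ZMod 2) × (Fin m → ZMod 2)}
    (hsum : u₁ + u₂ + u₃ + u₄ = 0)
    (hdot : u₁.1 ⬝ᵥ u₁.2 + u₂.1 ⬝ᵥ u₂.2 + u₃.1 ⬝ᵥ u₃.2 + u₄.1 ⬝ᵥ u₄.2 = 1) :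
    ¬ (Adj m u₁ z ∧ Adj m u₂ z ∧ Adj m u₃ z ∧ Adj m u₄ z) := by
  rintro ⟨⟨h₁, -⟩, ⟨h₂, -⟩, ⟨h₃, -⟩, ⟨h₄, -⟩⟩
  have hcross : (u₁ + u₂ + u₃ + u₄).1 ⬝ᵥ z.2 + z.1 ⬝ᵥ (u₁ + u₂ + u₃ + u₄).2 = 0 := by
    simp [hsum]
  have htwo : (2 : ZMod 2) = 0 := rfl
  simp only [Prod.fst_add, Prod.snd_add, add_dotProduct, dotProduct_add] at h₁ h₂ h₃ h₄ hcross
  exact one_ne_zero <| by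
    linear_combination h₁ + h₂ + h₃ + h₄ - hdot - hcross - (2 : ZMod 2) * (z.1 ⬝ᵥ z.2) * htwo

end Adj

section Partner

variable (a x₁ x₂ y₁ y₂ : Fin m → ZMod 2)

theorem exists_partner_of_eq (hm : 4 ≤ m) (hx : x₂ ≠ 0) :
    ∃ z₁ z₂, a ⬝ᵥ z₂ = 0 ∧ z₂ ∉ span (ZMod 2) {x₂} ∧
      z₂ ⬝ᵥ z₁ = 0 ∧ x₂ ⬝ᵥ z₁ = x₁ ⬝ᵥ z₂ ∧ x₂ ⬝ᵥ z₁ = y₁ ⬝ᵥ z₂ := by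
  obtain ⟨z₂, hz₂, hspan⟩ :=
    exists_dotProduct_eq_zero_notMem_span ![a, x₁ + y₁] {x₂} (by simp; omega)
  rw [Finset.coe_singleton] at hspan
  have hli : LinearIndependent (ZMod 2) ![x₂, z₂] := (LinearIndependent.pair_iff' hx).2
    fun c hc => hspan (hc ▸ smul_mem _ c (mem_span_singleton_self x₂))
  obtain ⟨z₁, hz₁⟩ := exists_dotProduct_eq_of_linearIndependent hli ![x₁ ⬝ᵥ z₂, 0]
  have hdot : x₁ ⬝ᵥ z₂ = y₁ ⬝ᵥ z₂ := by
    simpa [add_dotProduct, CharTwo.add_eq_zero] using hz₂ 1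
  exact ⟨z₁, z₂, hz₂ 0, hspan, hz₁ 1, hz₁ 0, (hz₁ 0).trans hdot⟩

theorem exists_partner_of_ne (hm : 4 ≤ m) (hx : x₂ ≠ 0) (hy : y₂ ≠ 0) (hxy : x₂ ≠ y₂) :
    ∃ z₁ z₂, a ⬝ᵥ z₂ = 0 ∧ z₂ ∉ span (ZMod 2) {x₂, y₂} ∧
      z₂ ⬝ᵥ z₁ = 0 ∧ x₂ ⬝ᵥ z₁ = x₁ ⬝ᵥ z₂ ∧ y₂ ⬝ᵥ z₁ = y₁ ⬝ᵥ z₂ := by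
  obtain ⟨z₂, hz₂, hspan⟩ := exists_dotProduct_eq_zero_notMem_span ![a] {x₂, y₂} <| by
    have := Finset.card_le_two (a := x₂) (b := y₂)
    simp only [Fintype.card_fin]
    omega
  rw [Finset.coe_pair] at hspan
  have hli : LinearIndependent (ZMod 2) ![z₂, x₂, y₂] :=
    linearIndependent_finCons.2
      ⟨linearIndependent_pair_zmod_two hx hy hxy, by rwa [range_cons_cons_empty]⟩
  obtain ⟨z₁, hz₁⟩ := exists_dotProduct_eq_of_linearIndependent hli ![0, x₁ ⬝ᵥ z₂, y₁ ⬝ᵥ z₂]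
  exact ⟨z₁, z₂, hz₂ 0, hspan, hz₁ 0, hz₁ 1, hz₁ 2⟩

theorem exists_partner (hm : 4 ≤ m) (hx : x₂ ≠ 0) (hy : y₂ ≠ 0) :
    ∃ z₁ z₂, a ⬝ᵥ z₂ = 0 ∧ z₂ ∉ span (ZMod 2) {x₂, y₂} ∧
      z₂ ⬝ᵥ z₁ = 0 ∧ x₂ ⬝ᵥ z₁ = x₁ ⬝ᵥ z₂ ∧ y₂ ⬝ᵥ z₁ = y₁ ⬝ᵥ z₂ := by
  by_cases hxy : x₂ = y₂
  · subst hxy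
    rw [Set.pair_eq_singleton]
    exact exists_partner_of_eq a x₁ x₂ y₁ hm hx
  · exact exists_partner_of_ne a x₁ x₂ y₁ y₂ hm hx hy hxy

end Partner

theorem commonNbhdJoined_zero_left (hm : 4 ≤ m) (a : Fin m → ZMod 2) :
    CommonNbhdJoined (Adj m) (0, 0) (a, 0) := by
  intro x y hx _ hy _
  rw [Adj.zero_left_iff] at hx hy
  obtain ⟨z₁, z₂, ha, hspan, hz, hxz, hyz⟩ := exists_partner a x.1 x.2 y.1 y.2 hm hx.2 hy.2
  have hz' : z₁ ⬝ᵥ z₂ = 0 := by rwa [dotProduct_comm]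
  have hne : ∀ w ∈ ({0, x.2, y.2} : Set (Fin m → ZMod 2)), w ≠ z₂ := by
    rintro w hw rfl
    refine hspan ?_
    obtain rfl | hw := hw
    exacts [zero_mem _, subset_span hw]
  refine ⟨(z₁, z₂), Adj.zero_left_iff.2 ⟨hz', (hne 0 (by simp)).symm⟩,
    (Adj.iff_of_dotProduct_eq_zero (by simp) hz').2 ⟨by simpa using ha.symm, hne 0 (by simp)⟩,
    (Adj.iff_of_dotProduct_eq_zero hx.1 hz').2 ⟨hxz, hne _ (by simp)⟩,
    (Adj.iff_of_dotProduct_eq_zero hy.1 hz').2 ⟨hyz, hne _ (by simp)⟩⟩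

theorem not_commonNbhdJoined_zero_diag {a b : Fin m → ZMod 2} (haa : a ⬝ᵥ a = 1)
    (hab : a ⬝ᵥ b = 0) (hb : b ≠ 0) : ¬ CommonNbhdJoined (Adj m) (0, 0) (a, a) := by
  intro h
  have hne : a ≠ b := by
    rintro rfl
    exact one_ne_zero (haa.symm.trans hab)
  obtain ⟨z, hz⟩ := h (a, b) (0, a + b)
    (by simp [Adj, hab, hb.symm]) (by simp [Adj, ZModModule.add_self, hne])
    (by simp [Adj, (sub_ne_zero.2 hne).symm, ← ZModModule.sub_eq_add])
    (by simp [Adj, hab, hb, ← add_assoc, ZModModule.add_self])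
  refine Adj.no_common_neighbour_of_add_eq_zero ?_ (by simp [haa, hab]) hz
  simp [ZModModule.add_self]

theorem stmt16 (m : ℕ) (hm : 4 ≤ m) :
    ¬ ∃ f : (Fin m → ZMod 2) × (Fin m → ZMod 2) →
            (Fin m → ZMod 2) × (Fin m → ZMod 2),
        Function.Bijective f ∧ (∀ u w, Adj m (f u) (f w) ↔ Adj m u w) ∧
        f (0, 0) = (0, 0) ∧
        f ((fun i => if i.val = 0 then 1 else 0), 0)
          = ((fun i => if i.val = 0 then 1 else 0),
             (fun i => if i.val = 0 then 1 else 0)) := by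
  rintro ⟨f, ⟨-, hsurj⟩, hf, h0, he⟩
  set e : Fin m → ZMod 2 := fun i => if i.val = 0 then 1 else 0 with he_def
  have hjoined := (commonNbhdJoined_zero_left hm e).map hsurj hf
  rw [h0, he] at hjoined
  have he_single : e = Pi.single ⟨0, by omega⟩ 1 := by
    ext i
    simp [he_def, Pi.single_apply, Fin.ext_iff]
  refine not_commonNbhdJoined_zero_diag (b := Pi.single ⟨1, by omega⟩ 1)
    (by simp [he_single]) (by simp [he_single]) (by simp) hjoined
end

section
/- Let m ≥ 2 and u ∈ 𝔽₂^m with u ≠ 0. The number of symmetric m×m matrices S over 𝔽₂ with zero diagonal satisfying S·u = 0 equals 2^{m(m-1)/2 − (m−1)}. -/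
/-!
Over a field of characteristic 2, the symmetric matrices with zero diagonal form a space of
dimension `n.choose 2`, with coordinates indexed by the off-diagonal unordered pairs. For `u ≠ 0`
the linear map `S ↦ S *ᵥ u` has image exactly the hyperplane `u ⬝ᵥ v = 0`: the terms of the double
sum `u ⬝ᵥ S *ᵥ u` cancel in pairs, and `v` in the hyperplane is the image of `v wᵀ + w vᵀ` for any
`w` with `w ⬝ᵥ u = 1`. Rank–nullity gives the solution space dimension `n.choose 2 - (n - 1)`.
-/

open Matrix Module

namespace Matrix

variable {ι K : Type*}

section CommRing

variable [CommRing K]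

variable (ι K) in
def symmZeroDiag : Submodule K (Matrix ι ι K) where
  carrier := {S | S.IsSymm ∧ ∀ i, S i i = 0}
  add_mem' hS hT := ⟨hS.1.add hT.1, fun i => by simp [hS.2 i, hT.2 i]⟩
  zero_mem' := ⟨isSymm_zero, fun _ => rfl⟩
  smul_mem' c _ hS := ⟨hS.1.smul c, fun i => by simp [hS.2 i]⟩

variable (ι K) in
def symmZeroDiagEquivOffDiag [DecidableEq ι] :
    symmZeroDiag ι K ≃ₗ[K] ({a : Sym2 ι // ¬a.IsDiag} → K) where
  toFun S a := Sym2.lift ⟨fun i j => S.1 i j, fun i j => S.2.1.apply j i⟩ a.1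
  map_add' _ _ := by
    funext ⟨a, _⟩
    induction a using Sym2.ind
    rfl
  map_smul' _ _ := by
    funext ⟨a, _⟩
    induction a using Sym2.ind
    rfl
  invFun f := ⟨of fun i j => if h : i = j then 0 else f ⟨s(i, j), by simpa⟩,
    IsSymm.ext fun i j => by
      by_cases h : i = j
      · subst h; rfl
      · simp only [of_apply, dif_neg h, dif_neg (Ne.symm h), Sym2.eq_swap],
    fun i => by simp⟩
  left_inv S := by
    ext i j
    by_cases h : i = j
    · subst h; simp [S.2.2 i]
    · simp [h]
  right_inv f := by
    funext ⟨a, ha⟩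
    induction a using Sym2.ind with
    | _ i j => simp [dif_neg (show i ≠ j by simpa using ha)]

theorem vecMulVec_add_vecMulVec_mem_symmZeroDiag [CharP K 2] (v w : ι → K) :
    vecMulVec v w + vecMulVec w v ∈ symmZeroDiag ι K :=
  ⟨by simp [IsSymm, transpose_vecMulVec, add_comm],
    fun i => by simp [vecMulVec_apply, mul_comm (w i), CharTwo.add_self_eq_zero]⟩

variable [Fintype ι]

theorem dotProduct_mulVec_self_eq_zero [CharP K 2] {S : Matrix ι ι K}
    (hS : S ∈ symmZeroDiag ι K) (u : ι → K) : u ⬝ᵥ S *ᵥ u = 0 := by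
  simp only [dotProduct, mulVec, Finset.mul_sum, ← Finset.sum_product']
  refine Finset.sum_involution (fun p _ => p.swap) ?_ ?_ (fun _ _ => Finset.mem_univ _)
    (fun _ _ => rfl)
  · rintro ⟨i, j⟩ -
    rw [Prod.fst_swap, Prod.snd_swap, hS.1.apply i j,
      ← CharTwo.add_self_eq_zero (u i * (S i j * u j))]
    ring
  · rintro ⟨i, j⟩ - hne hswap
    obtain rfl : j = i := congrArg Prod.fst hswap
    simp [hS.2 j] at hne

variable (u : ι → K)

def symmZeroDiagMulVec : symmZeroDiag ι K →ₗ[K] ι → K where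
  toFun S := S.1 *ᵥ u
  map_add' _ _ := add_mulVec _ _ _
  map_smul' _ _ := smul_mulVec _ _ _

end CommRing

section Field

variable [Fintype ι] [Field K]

theorem exists_dotProduct_eq_one_s19 {u : ι → K} (hu : u ≠ 0) : ∃ w, w ⬝ᵥ u = 1 := by
  classical
  obtain ⟨k, hk⟩ := Function.ne_iff.mp hu
  exact ⟨Pi.single k (u k)⁻¹, by simp [single_dotProduct, inv_mul_cancel₀ hk]⟩

theorem range_symmZeroDiagMulVec [CharP K 2] {u : ι → K} (hu : u ≠ 0) :
    LinearMap.range (symmZeroDiagMulVec u) = LinearMap.ker (dotProductBilin K K u) := by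
  ext v
  constructor
  · rintro ⟨S, rfl⟩
    exact dotProduct_mulVec_self_eq_zero S.2 u
  · intro hv
    rw [LinearMap.mem_ker, dotProductBilin_apply_apply] at hv
    obtain ⟨w, hw⟩ := exists_dotProduct_eq_one_s19 hu
    refine ⟨⟨_, vecMulVec_add_vecMulVec_mem_symmZeroDiag v w⟩, ?_⟩
    simp [symmZeroDiagMulVec, add_mulVec, vecMulVec_mulVec, hw, dotProduct_comm v u, hv]

theorem finrank_symmZeroDiag : finrank K (symmZeroDiag ι K) = (Fintype.card ι).choose 2 := by
  classical
  rw [(symmZeroDiagEquivOffDiag ι K).finrank_eq, finrank_fintype_fun_eq_card,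
    Sym2.card_subtype_not_diag]

theorem finrank_ker_dotProductBilin {u : ι → K} (hu : u ≠ 0) :
    finrank K (LinearMap.ker (dotProductBilin K K u)) = Fintype.card ι - 1 := by
  obtain ⟨w, hw⟩ := exists_dotProduct_eq_one_s19 hu
  have hne : dotProductBilin K K u ≠ 0 := fun h => by
    have := LinearMap.congr_fun h w
    rw [dotProductBilin_apply_apply, dotProduct_comm, hw] at this
    exact one_ne_zero this
  have := Dual.finrank_ker_add_one_of_ne_zero hne
  rw [finrank_fintype_fun_eq_card] at this
  omega

theorem finrank_ker_symmZeroDiagMulVec [CharP K 2] {u : ι → K} (hu : u ≠ 0) :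
    finrank K (LinearMap.ker (symmZeroDiagMulVec u)) =
      (Fintype.card ι).choose 2 - (Fintype.card ι - 1) := by
  have := LinearMap.finrank_range_add_finrank_ker (symmZeroDiagMulVec u)
  rw [range_symmZeroDiagMulVec hu, finrank_ker_dotProductBilin hu, finrank_symmZeroDiag] at this
  omega

theorem card_symmZeroDiag_mulVec_eq_zero [Finite K] [CharP K 2] {u : ι → K} (hu : u ≠ 0) :
    Nat.card {S : Matrix ι ι K // S.IsSymm ∧ (∀ i, S i i = 0) ∧ S *ᵥ u = 0} =
      Nat.card K ^ ((Fintype.card ι).choose 2 - (Fintype.card ι - 1)) := by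
  have e : LinearMap.ker (symmZeroDiagMulVec u) ≃
      {S : Matrix ι ι K // S.IsSymm ∧ (∀ i, S i i = 0) ∧ S *ᵥ u = 0} :=
    (Equiv.subtypeSubtypeEquivSubtypeInter (· ∈ symmZeroDiag ι K) (· *ᵥ u = 0)).trans
      (Equiv.subtypeEquivRight fun _ => and_assoc)
  rw [← Nat.card_congr e, natCard_eq_pow_finrank (K := K), finrank_ker_symmZeroDiagMulVec hu]

end Field
end Matrix

theorem stmt19_general (m : ℕ) (u : Fin m → ZMod 2) (hu : u ≠ 0) :
    Nat.card {S : Matrix (Fin m) (Fin m) (ZMod 2) //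
        S.IsSymm ∧ (∀ i, S i i = 0) ∧ S.mulVec u = 0}
      = 2 ^ (m * (m - 1) / 2 - (m - 1)) := by
  rw [card_symmZeroDiag_mulVec_eq_zero hu, Nat.card_zmod, Fintype.card_fin, Nat.choose_two_right]

theorem stmt19 (m : ℕ) (hm : 2 ≤ m) (u : Fin m → ZMod 2) (hu : u ≠ 0) :
    Nat.card {S : Matrix (Fin m) (Fin m) (ZMod 2) //
        S.IsSymm ∧ (∀ i, S i i = 0) ∧ S.mulVec u = 0}
      = 2 ^ (m * (m - 1) / 2 - (m - 1)) :=
  stmt19_general m u hu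
end
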